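/- Let X be a bounded nonnegative random variable and for each ρ > 0 let Y_ρ be such that conditionally on X, Y_ρ ~ Poisson(ρX). Then for every real t, E[exp(t √ρ (Y_ρ/ρ − X))] → E[exp(t^2 X / 2)] as ρ → ∞. -/

import Mathlib

/-!
Conditioning on `X`, the Poisson moment generating function gives
`E[exp (u Y - a X)] = E[exp ((ρ (exp u - 1) - a) X)]`. For `u = t / √ρ` and `a = t √ρ` the
coefficient `ρ (exp (t / √ρ) - 1) - t √ρ` tends to `t ^ 2 / 2` by the second-order Taylor
expansion of `exp`, and since `X` is bounded, dominated convergence finishes the proof.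
-/

open MeasureTheory ProbabilityTheory Filter Real Finset

/-- `Y` is, conditionally on `X`, Poisson distributed with rate `ρ * X`. -/
def CondPoisson {Ω : Type*} [MeasurableSpace Ω] (μ : Measure Ω)
    (X : Ω → ℝ) (Y : Ω → ℕ) (ρ : ℝ) : Prop :=
  ∀ (ℓ : ℕ) (A : Set ℝ), MeasurableSet A →
    μ {ω | X ω ∈ A ∧ Y ω = ℓ}
      = ∫⁻ ω in {ω | X ω ∈ A},
          ENNReal.ofReal ((ρ * X ω) ^ ℓ * Real.exp (-(ρ * X ω)) / ℓ.factorial) ∂μ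

open scoped ENNReal Topology

/-- Real-rate analogue of `poissonPMFReal`, in the form used by `CondPoisson`. -/
noncomputable def poissonWeight (x : ℝ) (ℓ : ℕ) : ℝ := x ^ ℓ * exp (-x) / ℓ.factorial

lemma poissonWeight_nonneg {x : ℝ} (hx : 0 ≤ x) (ℓ : ℕ) : 0 ≤ poissonWeight x ℓ := by
  unfold poissonWeight; positivity

@[fun_prop]
lemma measurable_poissonWeight (ℓ : ℕ) : Measurable fun x => poissonWeight x ℓ := by
  unfold poissonWeight; fun_prop

lemma hasSum_exp_mul_poissonWeight (u x : ℝ) :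
    HasSum (fun ℓ : ℕ => exp (u * ℓ) * poissonWeight x ℓ) (exp (x * (exp u - 1))) := by
  have hterm : ∀ ℓ : ℕ,
      exp (u * ℓ) * poissonWeight x ℓ = (x * exp u) ^ ℓ / ℓ.factorial * exp (-x) := by
    intro ℓ
    rw [poissonWeight, mul_comm u, exp_nat_mul, mul_pow]
    ring
  have hval : exp (x * (exp u - 1)) = exp (x * exp u) * exp (-x) := by
    rw [← exp_add]
    ring_nf
  rw [funext hterm, hval]
  simpa only [← exp_eq_exp_ℝ] using
    (NormedSpace.expSeries_div_hasSum_exp (x * exp u)).mul_right (exp (-x))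

namespace CondPoisson

variable {Ω : Type*} [MeasurableSpace Ω] {μ : Measure Ω} {X : Ω → ℝ} {Y : Ω → ℕ} {ρ : ℝ}

lemma map_restrict_eq (h : CondPoisson μ X Y ρ) (hX : Measurable X) (ℓ : ℕ) :
    (μ.restrict {ω | Y ω = ℓ}).map X
      = (μ.withDensity fun ω => ENNReal.ofReal (poissonWeight (ρ * X ω) ℓ)).map X := by
  ext A hA
  rw [Measure.map_apply hX hA, Measure.map_apply hX hA, Measure.restrict_apply (hX hA),
    withDensity_apply _ (hX hA)]
  exact h ℓ A hA

lemma setLIntegral_eq (h : CondPoisson μ X Y ρ) (hX : Measurable X) (ℓ : ℕ) {f : ℝ → ℝ≥0∞}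
    (hf : Measurable f) :
    ∫⁻ ω in {ω | Y ω = ℓ}, f (X ω) ∂μ
      = ∫⁻ ω, ENNReal.ofReal (poissonWeight (ρ * X ω) ℓ) * f (X ω) ∂μ := by
  rw [← lintegral_map hf hX, h.map_restrict_eq hX, lintegral_map hf hX]
  exact lintegral_withDensity_eq_lintegral_mul _ (by fun_prop) (hf.comp hX)

lemma lintegral_comp_mul_comp (h : CondPoisson μ X Y ρ) (hX : Measurable X) (hY : Measurable Y)
    (g : ℕ → ℝ≥0∞) {f : ℝ → ℝ≥0∞} (hf : Measurable f) :
    ∫⁻ ω, g (Y ω) * f (X ω) ∂μ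
      = ∫⁻ ω, (∑' ℓ, g ℓ * ENNReal.ofReal (poissonWeight (ρ * X ω) ℓ)) * f (X ω) ∂μ := by
  have hpart : ∫⁻ ω, g (Y ω) * f (X ω) ∂μ
      = ∑' ℓ, ∫⁻ ω in {ω | Y ω = ℓ}, g (Y ω) * f (X ω) ∂μ := by
    rw [← lintegral_iUnion (s := fun ℓ => {ω | Y ω = ℓ}) (fun ℓ => hY (measurableSet_singleton ℓ))
      (fun i j hij => Set.disjoint_left.2 fun ω hi hj => hij (hi.symm.trans hj)),
      Set.iUnion_eq_univ_iff.2 fun ω => ⟨Y ω, rfl⟩, Measure.restrict_univ]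
  calc ∫⁻ ω, g (Y ω) * f (X ω) ∂μ
      = ∑' ℓ, g ℓ * ∫⁻ ω in {ω | Y ω = ℓ}, f (X ω) ∂μ := by
        rw [hpart]
        refine tsum_congr fun ℓ => ?_
        rw [← lintegral_const_mul _ (by fun_prop)]
        exact setLIntegral_congr_fun (hY (measurableSet_singleton ℓ)) fun ω hω => by rw [hω]
    _ = ∑' ℓ, ∫⁻ ω, g ℓ * ENNReal.ofReal (poissonWeight (ρ * X ω) ℓ) * f (X ω) ∂μ := by
        refine tsum_congr fun ℓ => ?_
        rw [h.setLIntegral_eq hX ℓ hf, ← lintegral_const_mul _ (by fun_prop)]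
        simp only [mul_assoc]
    _ = _ := by
        rw [← lintegral_tsum fun ℓ => by fun_prop]
        simp only [ENNReal.tsum_mul_right]

lemma integral_exp_mul_sub (h : CondPoisson μ X Y ρ) (hX : Measurable X) (hY : Measurable Y)
    (hρ : 0 ≤ ρ) (hXnn : ∀ ω, 0 ≤ X ω) (u a : ℝ) :
    ∫ ω, exp (u * Y ω - a * X ω) ∂μ = ∫ ω, exp ((ρ * (exp u - 1) - a) * X ω) ∂μ := by
  have hmgf : ∀ ω, ∑' ℓ : ℕ,
      ENNReal.ofReal (exp (u * ℓ)) * ENNReal.ofReal (poissonWeight (ρ * X ω) ℓ)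
        = ENNReal.ofReal (exp (ρ * X ω * (exp u - 1))) := by
    intro ω
    have hw := poissonWeight_nonneg (mul_nonneg hρ (hXnn ω))
    simp_rw [← ENNReal.ofReal_mul (exp_pos _).le]
    rw [← ENNReal.ofReal_tsum_of_nonneg (fun ℓ => mul_nonneg (exp_pos _).le (hw ℓ))
      (hasSum_exp_mul_poissonWeight u _).summable, (hasSum_exp_mul_poissonWeight u _).tsum_eq]
  have hlin : ∫⁻ ω, ENNReal.ofReal (exp (u * Y ω - a * X ω)) ∂μ
      = ∫⁻ ω, ENNReal.ofReal (exp ((ρ * (exp u - 1) - a) * X ω)) ∂μ := by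
    calc ∫⁻ ω, ENNReal.ofReal (exp (u * Y ω - a * X ω)) ∂μ
        = ∫⁻ ω, ENNReal.ofReal (exp (u * Y ω)) * ENNReal.ofReal (exp (-(a * X ω))) ∂μ := by
          simp_rw [← ENNReal.ofReal_mul (exp_pos _).le, ← exp_add, sub_eq_add_neg]
      _ = ∫⁻ ω, ENNReal.ofReal (exp (ρ * X ω * (exp u - 1)))
            * ENNReal.ofReal (exp (-(a * X ω))) ∂μ := by
          rw [h.lintegral_comp_mul_comp hX hY (fun ℓ => ENNReal.ofReal (exp (u * ℓ)))
            (f := fun x => ENNReal.ofReal (exp (-(a * x)))) (by fun_prop)]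
          simp_rw [hmgf]
      _ = _ := lintegral_congr fun ω => by
          rw [← ENNReal.ofReal_mul (exp_pos _).le, ← exp_add]
          ring_nf
  rw [integral_eq_lintegral_of_nonneg_ae (ae_of_all _ fun _ => (exp_pos _).le) (by fun_prop),
    integral_eq_lintegral_of_nonneg_ae (ae_of_all _ fun _ => (exp_pos _).le) (by fun_prop), hlin]

end CondPoisson

lemma abs_exp_sub_quadratic_le {x : ℝ} (hx : |x| ≤ 1) :
    |exp x - (1 + x + x ^ 2 / 2)| ≤ |x| ^ 3 := by
  have h := Real.exp_bound hx (n := 3) (by norm_num)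
  norm_num [Finset.sum_range_succ, Nat.factorial] at h
  exact h.trans (mul_le_of_le_one_right (by positivity) (by norm_num))

lemma tendsto_sq_mul_exp_div_sub_one_sub (t : ℝ) :
    Tendsto (fun s : ℝ => s ^ 2 * (exp (t / s) - 1) - t * s) atTop (𝓝 (t ^ 2 / 2)) := by
  rw [← tendsto_sub_nhds_zero_iff]
  refine squeeze_zero_norm' ?_ (tendsto_const_nhds.div_atTop tendsto_id :
    Tendsto (fun s : ℝ => |t| ^ 3 / s) atTop (𝓝 0))
  filter_upwards [eventually_ge_atTop (max 1 |t|)] with s hs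
  have hs0 : 0 < s := lt_of_lt_of_le one_pos ((le_max_left _ _).trans hs)
  have hv : |t / s| ≤ 1 := by
    rw [abs_div, abs_of_pos hs0, div_le_one hs0]
    exact (le_max_right _ _).trans hs
  have hrem : s ^ 2 * (exp (t / s) - 1) - t * s - t ^ 2 / 2
      = s ^ 2 * (exp (t / s) - (1 + t / s + (t / s) ^ 2 / 2)) := by
    field_simp
    ring
  calc ‖s ^ 2 * (exp (t / s) - 1) - t * s - t ^ 2 / 2‖
      = s ^ 2 * |exp (t / s) - (1 + t / s + (t / s) ^ 2 / 2)| := by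
        rw [Real.norm_eq_abs, hrem, abs_mul, abs_of_pos (by positivity)]
    _ ≤ s ^ 2 * |t / s| ^ 3 := by gcongr; exact abs_exp_sub_quadratic_le hv
    _ = |t| ^ 3 / s := by
        rw [abs_div, abs_of_pos hs0]
        field_simp

lemma tendsto_mul_exp_div_sqrt_sub_one_sub (t : ℝ) :
    Tendsto (fun ρ : ℝ => ρ * (exp (t / √ρ) - 1) - t * √ρ) atTop (𝓝 (t ^ 2 / 2)) := by
  refine ((tendsto_sq_mul_exp_div_sub_one_sub t).comp tendsto_sqrt_atTop).congr' ?_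
  filter_upwards [eventually_ge_atTop 0] with ρ hρ
  simp only [Function.comp_apply, sq_sqrt hρ]

lemma tendsto_integral_exp_mul {ι Ω : Type*} {l : Filter ι} [l.IsCountablyGenerated]
    [MeasurableSpace Ω] {μ : Measure Ω} [IsFiniteMeasure μ] {X : Ω → ℝ} (hX : Measurable X)
    {C : ℝ} (hC : ∀ᵐ ω ∂μ, |X ω| ≤ C) {g : ι → ℝ} {c : ℝ} (hg : Tendsto g l (𝓝 c)) :
    Tendsto (fun i => ∫ ω, exp (g i * X ω) ∂μ) l (𝓝 (∫ ω, exp (c * X ω) ∂μ)) := by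
  have hg_le : ∀ᶠ i in l, |g i| ≤ |c| + 1 :=
    ((continuous_abs.tendsto c).comp hg).eventually (eventually_le_nhds (by linarith))
  refine tendsto_integral_filter_of_dominated_convergence (fun _ => exp ((|c| + 1) * C))
    (Eventually.of_forall fun i => by fun_prop) ?_ (integrable_const _)
    (ae_of_all _ fun ω => (hg.mul_const (X ω)).rexp)
  filter_upwards [hg_le] with i hi
  filter_upwards [hC] with ω hω
  rw [Real.norm_eq_abs, abs_of_pos (exp_pos _), exp_le_exp]
  calc g i * X ω ≤ |g i| * |X ω| := (le_abs_self _).trans (abs_mul _ _).le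
    _ ≤ (|c| + 1) * C := mul_le_mul hi hω (abs_nonneg _) (by positivity)

theorem condPoisson_mgf_convergence
    {Ω : Type*} [MeasurableSpace Ω] (μ : Measure Ω) [IsProbabilityMeasure μ]
    (X : Ω → ℝ) (Y : ℝ → Ω → ℕ)
    (hX : Measurable X) (hY : ∀ ρ, Measurable (Y ρ)) (hXnn : ∀ ω, 0 ≤ X ω)
    (hbdd : ∃ C : ℝ, ∀ ω, X ω ≤ C)
    (hcond : ∀ ρ > (0:ℝ), CondPoisson μ X (Y ρ) ρ) (t : ℝ) :
    Tendsto
      (fun ρ : ℝ => ∫ ω, Real.exp (t * Real.sqrt ρ * ((Y ρ ω : ℝ) / ρ - X ω)) ∂μ)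
      atTop (nhds (∫ ω, Real.exp (t ^ 2 * X ω / 2) ∂μ)) := by
  obtain ⟨C, hC⟩ := hbdd
  have hXC : ∀ ω, |X ω| ≤ C := fun ω => abs_le.2 ⟨by linarith [hXnn ω, hC ω], hC ω⟩
  have hlim := tendsto_integral_exp_mul hX (ae_of_all μ hXC)
    (tendsto_mul_exp_div_sqrt_sub_one_sub t)
  simp_rw [mul_div_right_comm _ (X _)]
  refine hlim.congr' ?_
  filter_upwards [eventually_gt_atTop 0] with ρ hρ
  rw [← (hcond ρ hρ).integral_exp_mul_sub hX (hY ρ) hρ.le hXnn]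
  congr with ω
  congr 1
  field_simp
  rw [sq_sqrt hρ.le]
  ring
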